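/- arXiv:2204.07175 — 6 statements merged into one kernel-verified Lean document; each statement's English description precedes it below -/
import Mathlib

section
/- Let C be a category with a stable system of monics M, having pullbacks, pushouts and final pullback complements along M-morphisms, such that pushouts along M-morphisms are stable under pullbacks and pushouts along M-morphisms are pullbacks. Then the domain functor dom : PB_h(C, M) → C from the category of pullback squares along M-morphisms (under horizontal composition) is a Grothendieck fibration, with Cartesian liftings given by final pullback complements. -/
open CategoryTheory CategoryTheory.Limits

universe v u

variable {C : Type u} [Category.{v} C]

/-- A stable system of monics. -/
structure StableSystemOfMonics (C : Type u) [Category.{v} C] where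
  P : MorphismProperty C
  mono_of : ∀ {X Y : C} (f : X ⟶ Y), P f → Mono f
  iso_mem : ∀ {X Y : C} (f : X ⟶ Y), IsIso f → P f
  comp_mem : ∀ {X Y Z : C} (f : X ⟶ Y) (g : Y ⟶ Z), P f → P g → P (f ≫ g)
  pullback_stable : ∀ {W X Y Z : C} (f' : W ⟶ X) (m' : W ⟶ Y) (m : X ⟶ Z) (f : Y ⟶ Z),
    P m → IsPullback f' m' m f → P m'

/-- `(n, g)` is a final pullback complement of `(f, m)`. -/
structure IsFPC {A B B' F : C} (f : A ⟶ B) (m : B ⟶ B') (n : A ⟶ F) (g : F ⟶ B') : Prop where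
  isPullback : IsPullback f n m g
  final : ∀ {X Y : C} (x : X ⟶ B) (p : X ⟶ Y) (y : Y ⟶ B') (t : X ⟶ A),
    IsPullback x p m y → t ≫ f = x →
    ∃! u : Y ⟶ F, p ≫ u = t ≫ n ∧ u ≫ g = y

/-- Objects of `PB_h(C, M)`: the morphisms of `M`. -/
structure MArrow (M : StableSystemOfMonics C) where
  dom : C
  cod : C
  hom : dom ⟶ cod
  mem : M.P hom

variable {M : StableSystemOfMonics C}

/-- Morphisms of `PB_h(C, M)`: pullback squares along arbitrary `C`-morphisms. -/
@[ext]
structure PBhHom (m n : MArrow M) where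
  top : m.dom ⟶ n.dom
  bot : m.cod ⟶ n.cod
  isPB : IsPullback top m.hom n.hom bot

instance : Category (MArrow M) where
  Hom m n := PBhHom m n
  id m := ⟨𝟙 _, 𝟙 _, IsPullback.of_horiz_isIso ⟨by simp⟩⟩
  comp φ ψ := ⟨φ.top ≫ ψ.top, φ.bot ≫ ψ.bot, φ.isPB.paste_horiz ψ.isPB⟩
  id_comp φ := PBhHom.ext (by dsimp; simp) (by dsimp; simp)
  comp_id φ := PBhHom.ext (by dsimp; simp) (by dsimp; simp)
  assoc φ ψ χ := PBhHom.ext (by dsimp; simp) (by dsimp; simp)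

@[simp] lemma PBh_comp_top {m n p : MArrow M} (φ : m ⟶ n) (ψ : n ⟶ p) :
    (φ ≫ ψ).top = φ.top ≫ ψ.top := rfl

@[simp] lemma PBh_comp_bot {m n p : MArrow M} (φ : m ⟶ n) (ψ : n ⟶ p) :
    (φ ≫ ψ).bot = φ.bot ≫ ψ.bot := rfl

/-- The domain functor `dom : PB_h(C, M) ⥤ C`. -/
def domFunctor (M : StableSystemOfMonics C) : MArrow M ⥤ C where
  obj m := m.dom
  map φ := φ.top

section Fibration

universe v₁ v₂ u₁ u₂

variable {E : Type u₁} [Category.{v₁} E] {B : Type u₂} [Category.{v₂} B]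

/-- Cartesian morphism for a functor `G`. -/
def IsCartesianLift (G : E ⥤ B) {e' e : E} (γ : e' ⟶ e) : Prop :=
  ∀ ⦃e'' : E⦄ (α : e'' ⟶ e) (g : G.obj e'' ⟶ G.obj e'),
    G.map α = g ≫ G.map γ → ∃! β : e'' ⟶ e', β ≫ γ = α ∧ G.map β = g

/-- `G : E ⥤ B` is a Grothendieck fibration. -/
def IsGrothendieckFibration (G : E ⥤ B) : Prop :=
  ∀ ⦃e : E⦄ ⦃b : B⦄ (f : b ⟶ G.obj e),
    ∃ (e' : E) (γ : e' ⟶ e) (h : G.obj e' = b),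
      eqToHom h.symm ≫ G.map γ = f ∧ IsCartesianLift G γ

end Fibration

/-- `C` has pushouts along `M`-morphisms. -/
def HasPushoutsAlongM (M : StableSystemOfMonics C) : Prop :=
  ∀ {X Y Z : C} (f : X ⟶ Y) (m : X ⟶ Z), M.P m →
    ∃ (W : C) (inl : Y ⟶ W) (inr : Z ⟶ W), IsPushout f m inl inr

/-- `C` has final pullback complements along `M`-morphisms. -/
def HasFPCsAlongM (M : StableSystemOfMonics C) : Prop :=
  ∀ {A B B' : C} (f : A ⟶ B) (m : B ⟶ B'), M.P m →
    ∃ (F : C) (n : A ⟶ F) (g : F ⟶ B'), IsFPC f m n g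

/-- Pushouts along `M`-morphisms are stable under pullbacks: in every commutative
cube over a pushout along an `M`-morphism whose four vertical faces are pullbacks,
the top face is a pushout. -/
def PushoutsAlongMStableUnderPullback (M : StableSystemOfMonics C) : Prop :=
  ∀ {X Y Z W X' Y' Z' W' : C}
    (f : X ⟶ Y) (m : X ⟶ Z) (g : Y ⟶ W) (n : Z ⟶ W)
    (f' : X' ⟶ Y') (m' : X' ⟶ Z') (g' : Y' ⟶ W') (n' : Z' ⟶ W')
    (x : X' ⟶ X) (y : Y' ⟶ Y) (z : Z' ⟶ Z) (w : W' ⟶ W),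
    M.P m → IsPushout f m g n →
    IsPullback f' x y f → IsPullback m' x z m →
    IsPullback g' y w g → IsPullback n' z w n →
    IsPushout f' m' g' n'

/-- Pushouts along `M`-morphisms are pullbacks. -/
def PushoutsAlongMArePullbacks (M : StableSystemOfMonics C) : Prop :=
  ∀ {X Y Z W : C} (f : X ⟶ Y) (m : X ⟶ Z) (g : Y ⟶ W) (n : Z ⟶ W),
    M.P m → IsPushout f m g n → IsPullback f m g n

namespace IsFPC

lemma mem_of_mem {A B B' F : C} {f : A ⟶ B} {m : B ⟶ B'} {n : A ⟶ F} {g : F ⟶ B'}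
    (hFPC : IsFPC f m n g) (hm : M.P m) : M.P n :=
  M.pullback_stable f n m g hm hFPC.isPullback

variable {X F : C} {n : MArrow M} {f : X ⟶ n.dom} {nn : X ⟶ F} {g : F ⟶ n.cod}

def toPBhHom (hFPC : IsFPC f n.hom nn g) : (⟨X, F, nn, hFPC.mem_of_mem n.mem⟩ : MArrow M) ⟶ n :=
  ⟨f, g, hFPC.isPullback⟩

/- A square `α` into `n` whose top factors as `t ≫ f` is a pullback of `n.hom` along `α.bot`, so
finality of the FPC yields the unique bottom `u` with `α.bot = u ≫ g`; the factor `(t, u)` is a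
pullback by cancelling the FPC square. -/
lemma isCartesianLift_toPBhHom (hFPC : IsFPC f n.hom nn g) :
    IsCartesianLift (domFunctor M) hFPC.toPBhHom := by
  intro p α t (ht : α.top = t ≫ f)
  obtain ⟨u, ⟨hpu, hug⟩, hu_unique⟩ := hFPC.final α.top p.hom α.bot t α.isPB ht.symm
  have hpb : IsPullback t p.hom nn u :=
    .of_right (ht ▸ hug ▸ α.isPB) hpu.symm hFPC.isPullback
  refine ⟨⟨t, u, hpb⟩, ⟨PBhHom.ext ht.symm hug, rfl⟩, ?_⟩
  rintro β ⟨hβ, hβt : β.top = t⟩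
  have hβu : β.bot = u := hu_unique _ ⟨by rw [← β.isPB.w, hβt], congrArg PBhHom.bot hβ⟩
  exact PBhHom.ext hβt hβu

end IsFPC

theorem domFunctor_isGrothendieckFibration_general (M : StableSystemOfMonics C)
    (hfpc : HasFPCsAlongM M) :
    IsGrothendieckFibration (domFunctor M) ∧
    ∀ (n : MArrow M) ⦃X : C⦄ (f : X ⟶ n.dom),
      ∃ (F : C) (nn : X ⟶ F) (g : F ⟶ n.cod) (hnn : M.P nn)
        (hFPC : IsFPC f n.hom nn g),
        IsCartesianLift (domFunctor M)
          (show (⟨X, F, nn, hnn⟩ : MArrow M) ⟶ n from ⟨f, g, hFPC.isPullback⟩) := by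
  refine ⟨fun n X f => ?_, fun n X f => ?_⟩ <;> obtain ⟨F, nn, g, hFPC⟩ := hfpc f n.hom n.mem
  · exact ⟨_, hFPC.toPBhHom, rfl, Category.id_comp f, hFPC.isCartesianLift_toPBhHom⟩
  · exact ⟨F, nn, g, hFPC.mem_of_mem n.mem, hFPC, hFPC.isCartesianLift_toPBhHom⟩

/-- Theorem (fibrational property of the domain functor): if `C` has pullbacks,
has pushouts and FPCs along `M`-morphisms, pushouts along `M`-morphisms are stable
under pullbacks, and pushouts along `M`-morphisms are pullbacks, then the domain
functor `dom : PB_h(C, M) ⥤ C` is a Grothendieck fibration, with the Cartesian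
liftings given by final pullback complements. -/
theorem domFunctor_isGrothendieckFibration (M : StableSystemOfMonics C)
    [HasPullbacks C]
    (hpo : HasPushoutsAlongM M) (hfpc : HasFPCsAlongM M)
    (hstab : PushoutsAlongMStableUnderPullback M)
    (hpopb : PushoutsAlongMArePullbacks M) :
    IsGrothendieckFibration (domFunctor M) ∧
    ∀ (n : MArrow M) ⦃X : C⦄ (f : X ⟶ n.dom),
      ∃ (F : C) (nn : X ⟶ F) (g : F ⟶ n.cod) (hnn : M.P nn)
        (hFPC : IsFPC f n.hom nn g),
        IsCartesianLift (domFunctor M)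
          (show (⟨X, F, nn, hnn⟩ : MArrow M) ⟶ n from ⟨f, g, hFPC.isPullback⟩) :=
  domFunctor_isGrothendieckFibration_general M hfpc
end

section
/- Let C be a category with a stable system of monics M that has pullbacks along M-morphisms and has final pullback complements along M-morphisms. Then the target functor T : FPC_v(C, M) → C|_M from the category of FPC squares along M-morphisms (under vertical composition) to the subcategory of C with only M-morphisms is a Grothendieck opfibration, with op-Cartesian liftings given by taking FPCs. -/
open CategoryTheory CategoryTheory.Limits

universe v u

variable {C : Type u} [Category.{v} C]

/-- `C` has pullbacks along `M`-morphisms. -/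
def HasPullbacksAlongM (M : StableSystemOfMonics C) : Prop :=
  ∀ {X Y Z : C} (f : X ⟶ Z) (m : Y ⟶ Z), M.P m →
    ∃ (W : C) (p : W ⟶ X) (q : W ⟶ Y), IsPullback p q f m

/-- If `g` is mono, the square with identity side is a pullback. -/
lemma isPullback_id_of_mono_aux {X Y Z : C} (h : X ⟶ Y) (g : Y ⟶ Z) (hg : Mono g) :
    IsPullback h (𝟙 X) g (h ≫ g) := by
  refine IsPullback.of_isLimit (PullbackCone.IsLimit.mk (by simp) (fun s => s.snd)
    (fun s => ?_) (fun s => by simp) (fun s m h1 h2 => by simpa using h2))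
  have := s.condition
  rw [← cancel_mono g]
  simpa [Category.assoc] using this.symm

/-- A commuting square with the unique-lifting property is a pullback. -/
lemma isPullback_of_existsUnique {P X Y Z : C} {fst : P ⟶ X} {snd : P ⟶ Y}
    {f : X ⟶ Z} {g : Y ⟶ Z} (w : fst ≫ f = snd ≫ g)
    (h : ∀ {T : C} (a : T ⟶ X) (b : T ⟶ Y), a ≫ f = b ≫ g →
      ∃! l : T ⟶ P, l ≫ fst = a ∧ l ≫ snd = b) : IsPullback fst snd f g := by
  refine ⟨⟨w⟩, ⟨PullbackCone.IsLimit.mk w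
    (fun s => (h s.fst s.snd s.condition).exists.choose)
    (fun s => (h s.fst s.snd s.condition).exists.choose_spec.1)
    (fun s => (h s.fst s.snd s.condition).exists.choose_spec.2)
    (fun s m h1 h2 => ?_)⟩⟩
  exact (h s.fst s.snd s.condition).unique ⟨h1, h2⟩
    (h s.fst s.snd s.condition).exists.choose_spec

/-- Vertical decomposition of FPC squares: if the top square and the composite
square are FPCs, then the bottom square is an FPC. -/
lemma IsFPC.of_top_of_comp (M : StableSystemOfMonics C) (hpb : HasPullbacksAlongM M)
    {A B B' A' A'' B'' : C} {f : A ⟶ B} {β : B ⟶ B'} {α : A ⟶ A'} {f' : A' ⟶ B'}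
    {γ : B' ⟶ B''} {c : A' ⟶ A''} {f'' : A'' ⟶ B''}
    (hβ : M.P β) (hγ : M.P γ)
    (htop : IsFPC f β α f') (hbig : IsFPC f (β ≫ γ) (α ≫ c) f'')
    (hcomm : c ≫ f'' = f' ≫ γ) : IsFPC f' γ c f'' := by
  have hγm : Mono γ := M.mono_of γ hγ
  have htopPB := htop.isPullback
  have hbigPB := hbig.isPullback
  constructor
  · -- the bottom square is a pullback
    refine isPullback_of_existsUnique hcomm.symm ?_
    intro T u₀ v₀ hcond
    obtain ⟨W, p₀, q₀, hW⟩ := hpb u₀ β hβ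
    have hw0 : q₀ ≫ (β ≫ γ) = (p₀ ≫ v₀) ≫ f'' := by
      rw [← Category.assoc, ← hW.w, Category.assoc, Category.assoc, hcond]
    obtain ⟨w₀, hw₀f, hw₀ac⟩ : ∃ w₀ : W ⟶ A, w₀ ≫ f = q₀ ∧ w₀ ≫ (α ≫ c) = p₀ ≫ v₀ :=
      ⟨hbigPB.lift q₀ (p₀ ≫ v₀) hw0, hbigPB.lift_fst _ _ _, hbigPB.lift_snd _ _ _⟩
    obtain ⟨w, ⟨hw1, hw2⟩, hwu⟩ := htop.final q₀ p₀ u₀ w₀ hW.flip hw₀f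
    have hQ : IsPullback q₀ p₀ (β ≫ γ) (u₀ ≫ γ) := by
      simpa using hW.flip.paste_vert (isPullback_id_of_mono_aux u₀ γ hγm)
    obtain ⟨z, _, hzu⟩ := hbig.final q₀ p₀ (u₀ ≫ γ) w₀ hQ hw₀f
    have hwc : w ≫ c = v₀ := by
      have e1 : w ≫ c = z := by
        refine hzu _ ⟨?_, ?_⟩
        · rw [← Category.assoc, hw1, Category.assoc]
        · rw [Category.assoc, hcomm, ← Category.assoc, hw2]
      have e2 : v₀ = z := by
        refine hzu _ ⟨?_, ?_⟩
        · rw [← hw₀ac]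
        · exact hcond.symm
      rw [e1, ← e2]
    refine ⟨w, ⟨hw2, hwc⟩, ?_⟩
    rintro w' ⟨hw'1, hw'2⟩
    -- w' is also the unique map from the top FPC finality
    have hm0 : q₀ ≫ β = (p₀ ≫ w') ≫ f' := by
      rw [← hW.w, Category.assoc, hw'1]
    obtain ⟨w₀', hw₀'f, hw₀'α⟩ : ∃ w₀' : W ⟶ A, w₀' ≫ f = q₀ ∧ w₀' ≫ α = p₀ ≫ w' :=
      ⟨htopPB.lift q₀ (p₀ ≫ w') hm0, htopPB.lift_fst _ _ _, htopPB.lift_snd _ _ _⟩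
    have hww : w₀' = w₀ := by
      apply hbigPB.hom_ext
      · rw [hw₀'f, hw₀f]
      · rw [hw₀ac, ← Category.assoc, hw₀'α, Category.assoc, hw'2]
    have : p₀ ≫ w' = w₀ ≫ α := by rw [← hw₀'α, hww]
    exact hwu w' ⟨this, hw'1⟩
  · -- finality of the bottom square
    intro X Y x p y t hPB ht
    obtain ⟨W, pW, qW, hW⟩ := hpb x β hβ
    have hQW : IsPullback qW (pW ≫ p) (β ≫ γ) y := hW.flip.paste_vert hPB
    have htw0 : qW ≫ β = (pW ≫ t) ≫ f' := by
      rw [← hW.w, Category.assoc, ht]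
    obtain ⟨tW, htWf, htWα⟩ : ∃ tW : W ⟶ A, tW ≫ f = qW ∧ tW ≫ α = pW ≫ t :=
      ⟨htopPB.lift qW (pW ≫ t) htw0, htopPB.lift_fst _ _ _, htopPB.lift_snd _ _ _⟩
    obtain ⟨u, ⟨hu1, hu2⟩, huu⟩ := hbig.final qW (pW ≫ p) y tW hQW htWf
    have key : t ≫ c = p ≫ u := by
      have hQ : IsPullback qW pW (β ≫ γ) (x ≫ γ) := by
        simpa using hW.flip.paste_vert (isPullback_id_of_mono_aux x γ hγm)
      obtain ⟨z, _, hzu⟩ := hbig.final qW pW (x ≫ γ) tW hQ htWf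
      have e1 : t ≫ c = z := by
        refine hzu _ ⟨?_, ?_⟩
        · rw [← Category.assoc, ← htWα, Category.assoc]
        · rw [Category.assoc, hcomm, ← Category.assoc, ht]
      have e2 : p ≫ u = z := by
        refine hzu _ ⟨?_, ?_⟩
        · rw [← Category.assoc, hu1]
        · rw [Category.assoc, hu2, hPB.w]
      rw [e1, e2]
    refine ⟨u, ⟨key.symm, hu2⟩, ?_⟩
    rintro u' ⟨hu'1, hu'2⟩
    refine huu u' ⟨?_, hu'2⟩
    rw [Category.assoc, hu'1, ← Category.assoc, ← htWα, Category.assoc]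

/-- The target functor `T : FPC_v(C, M) ⥤ C|_M` on the category of FPC squares
along `M`-morphisms (under vertical composition), sending a square to its
codomain-side vertical `M`-morphism, is a Grothendieck opfibration, with
op-Cartesian liftings given by taking FPCs.

Unfolded, this states: for every object `f : A ⟶ B` of `FPC_v(C, M)` and every
morphism `β : B ⟶ B'` of `C|_M` (i.e. `β ∈ M`) out of `T(f) = B`, there is an
op-Cartesian lifting, namely an FPC square `(α, f')` over `(f, β)` with `α ∈ M`,
such that any morphism of `FPC_v(C, M)` out of `f` (an FPC square `(a, b)` from
`f` to `f''` with `a, b ∈ M`) whose image `b` factors in `C|_M` as `b = β ≫ γ`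
factors uniquely through the lifting via a morphism `(c, γ) : f' ⟶ f''` of
`FPC_v(C, M)` lying over `γ`. -/
theorem targetFunctor_FPCv_isGrothendieckOpfibration
    (M : StableSystemOfMonics C)
    (hpb : HasPullbacksAlongM M) (hfpc : HasFPCsAlongM M) :
    ∀ {A B B' : C} (f : A ⟶ B) (β : B ⟶ B'), M.P β →
      ∃ (A' : C) (α : A ⟶ A') (f' : A' ⟶ B') (_ : M.P α) (_ : IsFPC f β α f'),
        ∀ {A'' B'' : C} (f'' : A'' ⟶ B'') (a : A ⟶ A'') (b : B ⟶ B'') (γ : B' ⟶ B''),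
          M.P a → M.P b → M.P γ → IsFPC f b a f'' → b = β ≫ γ →
          ∃! c : A' ⟶ A'', (M.P c ∧ IsFPC f' γ c f'') ∧ α ≫ c = a := by
  intro A B B' f β hβ
  obtain ⟨A', α, f', hfpc'⟩ := hfpc f β hβ
  have hα : M.P α := M.pullback_stable f α β f' hβ hfpc'.isPullback
  refine ⟨A', α, f', hα, hfpc', ?_⟩
  intro A'' B'' f'' a b γ ha hb hγ hFPCb hbe
  subst hbe
  have hγm : Mono γ := M.mono_of γ hγ
  have hQ : IsPullback f α (β ≫ γ) (f' ≫ γ) := by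
    simpa using hfpc'.isPullback.paste_vert (isPullback_id_of_mono_aux f' γ hγm)
  obtain ⟨c, ⟨hc1, hc2⟩, hcu⟩ := hFPCb.final f α (f' ≫ γ) (𝟙 A) hQ (by simp)
  have hac : α ≫ c = a := by simpa using hc1
  have hbig : IsFPC f (β ≫ γ) (α ≫ c) f'' := by rw [hac]; exact hFPCb
  have hbot : IsFPC f' γ c f'' := IsFPC.of_top_of_comp M hpb hβ hγ hfpc' hbig hc2
  have hcM : M.P c := M.pullback_stable f' c γ f'' hγ hbot.isPullback
  refine ⟨c, ⟨⟨hcM, hbot⟩, hac⟩, ?_⟩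
  rintro c' ⟨⟨_, hc'FPC⟩, hac'⟩
  refine hcu c' ⟨by simpa using hac', hc'FPC.isPullback.w.symm⟩
end

section
/- Let C be a category with a stable system of monics M that has pushouts along M-morphisms, such that M-morphisms are stable under pushout. Then the source functor S : PO_v(C, M) → C|_M from the category of pushout squares along M-morphisms (under vertical composition) is a Grothendieck opfibration, with op-Cartesian liftings provided by pushouts. -/
open CategoryTheory CategoryTheory.Limits

universe v u

variable {C : Type u} [Category.{v} C]

/-- `M`-morphisms are stable under pushout. -/
def MStableUnderPushout (M : StableSystemOfMonics C) : Prop :=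
  ∀ {X Y Z W : C} (f : X ⟶ Y) (m : X ⟶ Z) (inl : Y ⟶ W) (inr : Z ⟶ W),
    M.P m → IsPushout f m inl inr → M.P inl

/-- Objects of `PO_v(C, M)`: arbitrary morphisms of `C`. -/
structure VObj (M : StableSystemOfMonics C) where
  dom : C
  cod : C
  hom : dom ⟶ cod

variable {M : StableSystemOfMonics C}

/-- Morphisms of `PO_v(C, M)`: pushout squares whose vertical sides are in `M`. -/
@[ext]
structure POvHom (f g : VObj M) where
  src : f.dom ⟶ g.dom
  tgt : f.cod ⟶ g.cod
  srcM : M.P src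
  tgtM : M.P tgt
  isPO : IsPushout f.hom src tgt g.hom

instance : Category (VObj M) where
  Hom f g := POvHom f g
  id f := ⟨𝟙 _, 𝟙 _, M.iso_mem _ inferInstance, M.iso_mem _ inferInstance,
    IsPushout.of_vert_isIso ⟨by simp⟩⟩
  comp φ ψ := ⟨φ.src ≫ ψ.src, φ.tgt ≫ ψ.tgt, M.comp_mem _ _ φ.srcM ψ.srcM,
    M.comp_mem _ _ φ.tgtM ψ.tgtM, φ.isPO.paste_vert ψ.isPO⟩
  id_comp φ := POvHom.ext (by dsimp; simp) (by dsimp; simp)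
  comp_id φ := POvHom.ext (by dsimp; simp) (by dsimp; simp)
  assoc φ ψ χ := POvHom.ext (by dsimp; simp) (by dsimp; simp)

/-- The subcategory `C|_M` of `C` with only `M`-morphisms. -/
def MCat (_ : StableSystemOfMonics C) : Type u := C

instance : Category (MCat M) where
  Hom X Y := {f : (show C from X) ⟶ (show C from Y) // M.P f}
  id X := ⟨𝟙 _, M.iso_mem _ inferInstance⟩
  comp f g := ⟨f.1 ≫ g.1, M.comp_mem _ _ f.2 g.2⟩
  id_comp f := Subtype.ext (Category.id_comp f.1)
  comp_id f := Subtype.ext (Category.comp_id f.1)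
  assoc f g h := Subtype.ext (Category.assoc f.1 g.1 h.1)

/-- The source functor `S : PO_v(C, M) ⥤ C|_M`, sending a pushout square to its
domain-side vertical `M`-morphism. -/
def sourceFunctor (M : StableSystemOfMonics C) : VObj M ⥤ MCat M where
  obj f := (f.dom : MCat M)
  map φ := ⟨φ.src, φ.srcM⟩
  map_id _ := rfl
  map_comp _ _ := rfl

section Opfibration

universe v₁ v₂ u₁ u₂

variable {E : Type u₁} [Category.{v₁} E] {B : Type u₂} [Category.{v₂} B]

/-- Op-Cartesian morphism for a functor `G`. -/
def IsOpCartesianLift (G : E ⥤ B) {e e' : E} (φ : e ⟶ e') : Prop :=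
  ∀ ⦃e'' : E⦄ (α : e ⟶ e'') (g : G.obj e' ⟶ G.obj e''),
    G.map α = G.map φ ≫ g → ∃! β : e' ⟶ e'', φ ≫ β = α ∧ G.map β = g

/-- `G : E ⥤ B` is a Grothendieck opfibration. -/
def IsGrothendieckOpfibration (G : E ⥤ B) : Prop :=
  ∀ ⦃e : E⦄ ⦃b' : B⦄ (f : G.obj e ⟶ b'),
    ∃ (e' : E) (φ : e ⟶ e') (h : G.obj e' = b'),
      G.map φ ≫ eqToHom h = f ∧ IsOpCartesianLift G φ

end Opfibration

/-! Every morphism `φ : f ⟶ g` of `PO_v(C, M)` is op-Cartesian. Given `α : f ⟶ h` whose source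
side factors as `φ.src ≫ k`, the universal property of the pushout square `φ` yields the unique
candidate for the target side, pushout-pushout decomposition makes the resulting lower square a
pushout, and stability of `M` under pushout puts its target side in `M`. -/

namespace POvHom

theorem ext_of_comp_tgt {f g h : VObj M} (φ : f ⟶ g) {β β' : g ⟶ h}
    (hsrc : β.src = β'.src) (htgt : φ.tgt ≫ β.tgt = φ.tgt ≫ β'.tgt) : β = β' := by
  refine POvHom.ext hsrc (φ.isPO.hom_ext htgt ?_)
  rw [β.isPO.w, β'.isPO.w, hsrc]

section Factor

variable (hstable : MStableUnderPushout M) {f g h : VObj M} (φ : f ⟶ g) (α : f ⟶ h)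
  (k : g.dom ⟶ h.dom) (hk : M.P k) (hα : α.src = φ.src ≫ k)

noncomputable def factor : g ⟶ h :=
  have isPO : IsPushout g.hom k (φ.isPO.desc α.tgt (k ≫ h.hom) (by
      rw [α.isPO.w, hα, Category.assoc])) h.hom :=
    (hα ▸ α.isPO : IsPushout f.hom (φ.src ≫ k) α.tgt h.hom).of_top' φ.isPO
  ⟨k, _, hk, hstable _ _ _ _ hk isPO, isPO⟩

theorem comp_factor : φ ≫ factor hstable φ α k hk hα = α :=
  POvHom.ext hα.symm (φ.isPO.inl_desc _ _ _)

end Factor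

end POvHom

theorem isOpCartesianLift_sourceFunctor (hstable : MStableUnderPushout M) {f g : VObj M}
    (φ : f ⟶ g) : IsOpCartesianLift (sourceFunctor M) φ := by
  intro h α k hk
  have hα : α.src = φ.src ≫ k.1 := congrArg Subtype.val hk
  refine ⟨POvHom.factor hstable φ α k.1 k.2 hα, ⟨POvHom.comp_factor .., rfl⟩, ?_⟩
  rintro β ⟨hcomp, hβ⟩
  refine POvHom.ext_of_comp_tgt φ (congrArg Subtype.val hβ) ?_
  exact (congrArg POvHom.tgt hcomp).trans (φ.isPO.inl_desc _ _ _).symm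

/-- If `C` has pushouts along `M`-morphisms and `M`-morphisms are stable under
pushout, then the source functor `S : PO_v(C, M) ⥤ C|_M` is a Grothendieck
opfibration, with op-Cartesian liftings provided by pushouts. -/
theorem sourceFunctor_POv_isGrothendieckOpfibration (M : StableSystemOfMonics C)
    (hpo : HasPushoutsAlongM M) (hstable : MStableUnderPushout M) :
    IsGrothendieckOpfibration (sourceFunctor M) ∧
    ∀ (f : VObj M) ⦃X : C⦄ (m : f.dom ⟶ X) (hm : M.P m),
      ∃ (W : C) (inl : f.cod ⟶ W) (inr : X ⟶ W) (hinl : M.P inl)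
        (hPO : IsPushout f.hom m inl inr),
        IsOpCartesianLift (sourceFunctor M)
          (show f ⟶ (⟨X, W, inr⟩ : VObj M) from ⟨m, inl, hm, hinl, hPO⟩) := by
  refine ⟨fun e b' m ↦ ?_, fun f X m hm ↦ ?_⟩
  · obtain ⟨W, inl, inr, hPO⟩ := hpo e.hom m.1 m.2
    exact ⟨⟨(b' : C), W, inr⟩, ⟨m.1, inl, m.2, hstable _ _ _ _ m.2 hPO, hPO⟩, rfl,
      Category.comp_id _, isOpCartesianLift_sourceFunctor hstable _⟩
  · obtain ⟨W, inl, inr, hPO⟩ := hpo f.hom m hm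
    exact ⟨W, inl, inr, hstable _ _ _ _ hm hPO, hPO, isOpCartesianLift_sourceFunctor hstable _⟩
end

section
/- Let C be a category that has multi-sums and has pullbacks. For every commutative diagram consisting of multi-sum elements A → M ← B and C → N ← D, morphisms A → C and B → D, a cospan C → X ← D factoring through N, and a morphism M → X factoring the induced cospan A → X ← B, there exists a universal arrow M → N making the whole diagram commute (multi-sum extension lemma). -/
open CategoryTheory CategoryTheory.Limits

universe v u

variable {C : Type u} [Category.{v} C]

/-- A multi-sum of objects `A` and `B`: a family of cospans `A ⟶ obj j ⟵ B` such
that every cospan `A ⟶ X ⟵ B` factors through some member, essentially uniquely. -/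
structure MultiSum (A B : C) where
  J : Type (max u v)
  obj : J → C
  inl : ∀ j, A ⟶ obj j
  inr : ∀ j, B ⟶ obj j
  factor : ∀ {X : C} (f : A ⟶ X) (g : B ⟶ X),
    ∃ (j : J) (x : obj j ⟶ X), inl j ≫ x = f ∧ inr j ≫ x = g
  uniq : ∀ {X : C} (f : A ⟶ X) (g : B ⟶ X) (j k : J)
    (x : obj j ⟶ X) (y : obj k ⟶ X),
    inl j ≫ x = f → inr j ≫ x = g → inl k ≫ y = f → inr k ≫ y = g →
    ∃! φ : obj j ⟶ obj k, IsIso φ ∧ φ ≫ y = x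

/-- `C` has multi-sums. -/
def HasMultiSums (C : Type u) [Category.{v} C] : Prop :=
  ∀ A B : C, Nonempty (MultiSum A B)

/-!
Pull `v : M ⟶ X` back along `u : N ⟶ X`. The cospans `A ⟶ M ⟵ B` and `A ⟶ N ⟵ B` (through
`a`, `b`) agree over `X`, so they lift to a cospan into the pullback, which factors through some
multi-sum member `M'`. Composing with the projection to `M` gives a second factorization of
`A ⟶ M ⟵ B`, hence an isomorphism `M' ≅ M` by essential uniqueness; its inverse followed by
the projection to `N` is the required arrow.
-/

namespace MultiSum

variable {A B : C} (ms : MultiSum A B)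

theorem isIso_of_inl_comp_of_inr_comp {i j : ms.J} (x : ms.obj i ⟶ ms.obj j)
    (h₁ : ms.inl i ≫ x = ms.inl j) (h₂ : ms.inr i ≫ x = ms.inr j) : IsIso x := by
  obtain ⟨φ, ⟨hφ, hφx⟩, -⟩ :=
    ms.uniq (ms.inl j) (ms.inr j) i j x (𝟙 _) h₁ h₂ (Category.comp_id _) (Category.comp_id _)
  rw [Category.comp_id] at hφx
  exact hφx ▸ hφ

theorem exists_section {j : ms.J} {P : C} (p : P ⟶ ms.obj j) (f : A ⟶ P) (g : B ⟶ P)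
    (hf : f ≫ p = ms.inl j) (hg : g ≫ p = ms.inr j) :
    ∃ s : ms.obj j ⟶ P, ms.inl j ≫ s = f ∧ ms.inr j ≫ s = g ∧ s ≫ p = 𝟙 _ := by
  obtain ⟨i, x, hx₁, hx₂⟩ := ms.factor f g
  have h₁ : ms.inl i ≫ x ≫ p = ms.inl j := by rw [← Category.assoc, hx₁, hf]
  have h₂ : ms.inr i ≫ x ≫ p = ms.inr j := by rw [← Category.assoc, hx₂, hg]
  have := ms.isIso_of_inl_comp_of_inr_comp (x ≫ p) h₁ h₂
  refine ⟨inv (x ≫ p) ≫ x, ?_, ?_, by simp⟩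
  · rw [← h₁, Category.assoc, IsIso.hom_inv_id_assoc, hx₁]
  · rw [← h₂, Category.assoc, IsIso.hom_inv_id_assoc, hx₂]

end MultiSum

theorem multiSum_extension_general [HasPullbacks C]
    {A B Cc D X : C}
    (ms : MultiSum A B) (j : ms.J) (ns : MultiSum Cc D) (k : ns.J)
    (a : A ⟶ Cc) (b : B ⟶ D)
    (c : Cc ⟶ X) (d : D ⟶ X)
    (u : ns.obj k ⟶ X) (hu₁ : ns.inl k ≫ u = c) (hu₂ : ns.inr k ≫ u = d)
    (v : ms.obj j ⟶ X) (hv₁ : ms.inl j ≫ v = a ≫ c) (hv₂ : ms.inr j ≫ v = b ≫ d) :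
    ∃ w : ms.obj j ⟶ ns.obj k,
      ms.inl j ≫ w = a ≫ ns.inl k ∧ ms.inr j ≫ w = b ≫ ns.inr k ∧ w ≫ u = v := by
  let f : A ⟶ pullback v u := pullback.lift (ms.inl j) (a ≫ ns.inl k) (by simp [hu₁, hv₁])
  let g : B ⟶ pullback v u := pullback.lift (ms.inr j) (b ≫ ns.inr k) (by simp [hu₂, hv₂])
  obtain ⟨s, hs₁, hs₂, hs⟩ :=
    ms.exists_section (pullback.fst v u) f g (pullback.lift_fst _ _ _) (pullback.lift_fst _ _ _)
  refine ⟨s ≫ pullback.snd v u, ?_, ?_, ?_⟩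
  · rw [← Category.assoc, hs₁, pullback.lift_snd]
  · rw [← Category.assoc, hs₂, pullback.lift_snd]
  · rw [Category.assoc, ← pullback.condition, ← Category.assoc, hs, Category.id_comp]

/-- Multi-sum extension lemma: in a category with multi-sums and pullbacks, given
multi-sum elements `A ⟶ M ⟵ B` and `Cc ⟶ N ⟵ D`, morphisms `a : A ⟶ Cc` and
`b : B ⟶ D`, a cospan `Cc ⟶ X ⟵ D` factoring through `N` via `u`, and a morphism
`v : M ⟶ X` factoring the induced cospan `A ⟶ X ⟵ B`, there exists a universal
arrow `M ⟶ N` making the whole diagram commute. -/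
theorem multiSum_extension [HasPullbacks C]
    (hms : HasMultiSums C)
    {A B Cc D X : C}
    (ms : MultiSum A B) (j : ms.J) (ns : MultiSum Cc D) (k : ns.J)
    (a : A ⟶ Cc) (b : B ⟶ D)
    (c : Cc ⟶ X) (d : D ⟶ X)
    (u : ns.obj k ⟶ X) (hu₁ : ns.inl k ≫ u = c) (hu₂ : ns.inr k ≫ u = d)
    (v : ms.obj j ⟶ X) (hv₁ : ms.inl j ≫ v = a ≫ c) (hv₂ : ms.inr j ≫ v = b ≫ d) :
    ∃ w : ms.obj j ⟶ ns.obj k,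
      ms.inl j ≫ w = a ≫ ns.inl k ∧ ms.inr j ≫ w = b ≫ ns.inr k ∧ w ≫ u = v :=
  multiSum_extension_general ms j ns k a b c d u hu₁ hu₂ v hv₁ hv₂
end

section
/- Let C be a category with a stable system of monics M comprising all monomorphisms of C, that has pullbacks along monomorphisms, and that has an M-partial map classifier. Then the final pullback complement A → F → C of a composable sequence of monomorphisms A ↣ B ↣ C consists of two monomorphisms. -/
open CategoryTheory CategoryTheory.Limits

universe v u

variable {C : Type u} [Category.{v} C]

/-- An `M`-partial map classifier: a functor `T` with a natural transformation
`η : 𝟭 C ⟶ T` whose components lie in `M`, such that every span `A ⟵m X ⟶f B` with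
`m ∈ M` is classified by a unique `φ : A ⟶ T(B)` making `(m, f)` a pullback of
`(φ, η_B)`. -/
structure MPartialMapClassifier (M : StableSystemOfMonics C) where
  T : C ⥤ C
  η : 𝟭 C ⟶ T
  ηM : ∀ X : C, M.P (η.app X)
  classify : ∀ {X A B : C} (m : X ⟶ A) (f : X ⟶ B), M.P m →
    ∃! φ : A ⟶ T.obj B, IsPullback f m (η.app B) φ

/-- If `M` is the class of all monomorphisms, `C` has pullbacks along monomorphisms
and an `M`-partial map classifier, then the final pullback complement of a
composable sequence of monomorphisms consists of two monomorphisms. -/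
theorem fpc_of_monos_consists_of_monos (M : StableSystemOfMonics C)
    (hM : ∀ {X Y : C} (f : X ⟶ Y), M.P f ↔ Mono f)
    (hpb : HasPullbacksAlongM M)
    (pmc : MPartialMapClassifier M)
    {A B B' F : C} (f : A ⟶ B) (m : B ⟶ B') (hf : Mono f) (hm : Mono m)
    (n : A ⟶ F) (g : F ⟶ B') (hFPC : IsFPC f m n g) :
    Mono n ∧ Mono g := by
  have hcomm : f ≫ m = n ≫ g := hFPC.isPullback.w
  constructor
  · constructor
    intro X a b hab
    have : a ≫ f ≫ m = b ≫ f ≫ m := by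
      rw [hcomm, ← Category.assoc, ← Category.assoc, hab]
    have : (a ≫ f) ≫ m = (b ≫ f) ≫ m := by simpa using this
    have := (cancel_mono m).mp this
    exact (cancel_mono f).mp this
  · constructor
    intro Y u₁ u₂ h
    obtain ⟨W, p, q, hpq⟩ := hpb (u₁ ≫ g) m ((hM m).mpr hm)
    -- hpq : IsPullback p q (u₁ ≫ g) m, so flip : IsPullback q p m (u₁ ≫ g)
    have w₁ : q ≫ m = (p ≫ u₁) ≫ g := by
      rw [← hpq.w]; simp
    have w₂ : q ≫ m = (p ≫ u₂) ≫ g := by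
      rw [w₁]; simp [h]
    set t₁ := hFPC.isPullback.lift q (p ≫ u₁) w₁ with ht₁
    set t₂ := hFPC.isPullback.lift q (p ≫ u₂) w₂ with ht₂
    have ht₁f : t₁ ≫ f = q := hFPC.isPullback.lift_fst _ _ _
    have ht₂f : t₂ ≫ f = q := hFPC.isPullback.lift_fst _ _ _
    have ht₁n : t₁ ≫ n = p ≫ u₁ := hFPC.isPullback.lift_snd _ _ _
    have ht₂n : t₂ ≫ n = p ≫ u₂ := hFPC.isPullback.lift_snd _ _ _
    have hteq : t₁ = t₂ := by
      apply (cancel_mono f).mp; rw [ht₁f, ht₂f]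
    obtain ⟨u, _, huniq⟩ := hFPC.final q p (u₁ ≫ g) t₁ hpq.flip ht₁f
    have h1 : u₁ = u := huniq u₁ ⟨ht₁n.symm, rfl⟩
    have h2 : u₂ = u := huniq u₂ ⟨by rw [hteq, ht₂n], h.symm⟩
    rw [h1, h2]
end

section
/- Let V be a vertical weak adhesive HLR category with respect to a stable system of monics M, i.e., V has pullbacks along M-morphisms, pushouts along M-morphisms with M stable under pushout, and pushouts along M-morphisms are vertical weak van Kampen squares. If additionally pushouts along M-morphisms in V are stable under arbitrary pullbacks, then V is also a horizontal weak adhesive HLR category (hence a weak adhesive HLR category). -/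
open CategoryTheory CategoryTheory.Limits

universe v u

variable {C : Type u} [Category.{v} C]

/-- The (full) van Kampen property of a square `f ≫ g = m ≫ n`: for every
commutative cube over it whose back faces (over `f` and `m`) are pullbacks, the
top face is a pushout if and only if the front and right faces (over `g` and `n`)
are pullbacks. -/
def IsVanKampenSquare {X Y Z W : C} (f : X ⟶ Y) (m : X ⟶ Z) (g : Y ⟶ W) (n : Z ⟶ W) :
    Prop :=
  ∀ {X' Y' Z' W' : C}
    (f' : X' ⟶ Y') (m' : X' ⟶ Z') (g' : Y' ⟶ W') (n' : Z' ⟶ W')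
    (x : X' ⟶ X) (y : Y' ⟶ Y) (z : Z' ⟶ Z) (w : W' ⟶ W),
    IsPullback f' x y f → IsPullback m' x z m →
    CommSq g' y w g → CommSq n' z w n → CommSq f' m' g' n' →
    (IsPushout f' m' g' n' ↔ (IsPullback g' y w g ∧ IsPullback n' z w n))

/-- The vertical weak van Kampen property: the van Kampen condition restricted to
cubes all of whose vertical morphisms lie in `M`. -/
def IsVerticalWeakVKSquare (M : StableSystemOfMonics C)
    {X Y Z W : C} (f : X ⟶ Y) (m : X ⟶ Z) (g : Y ⟶ W) (n : Z ⟶ W) : Prop :=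
  ∀ {X' Y' Z' W' : C}
    (f' : X' ⟶ Y') (m' : X' ⟶ Z') (g' : Y' ⟶ W') (n' : Z' ⟶ W')
    (x : X' ⟶ X) (y : Y' ⟶ Y) (z : Z' ⟶ Z) (w : W' ⟶ W),
    M.P x → M.P y → M.P z → M.P w →
    IsPullback f' x y f → IsPullback m' x z m →
    CommSq g' y w g → CommSq n' z w n → CommSq f' m' g' n' →
    (IsPushout f' m' g' n' ↔ (IsPullback g' y w g ∧ IsPullback n' z w n))

/-- In a vertical weak adhesive HLR category, pushouts along `M`-morphisms are
pullbacks. -/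
lemma aux_pushoutAlongM_isPullback (M : StableSystemOfMonics C)
    (hstab : MStableUnderPushout M)
    (hVK : ∀ {X Y Z W : C} (f : X ⟶ Y) (m : X ⟶ Z) (g : Y ⟶ W) (n : Z ⟶ W),
      M.P m → IsPushout f m g n → IsVerticalWeakVKSquare M f m g n)
    {X Y Z W : C} {f : X ⟶ Y} {m : X ⟶ Z} {g : Y ⟶ W} {n : Z ⟶ W}
    (hm : M.P m) (po : IsPushout f m g n) : IsPullback f m g n := by
  have hg : M.P g := hstab f m g n hm po
  have hmono : Mono m := M.mono_of m hm
  have h := hVK f m g n hm po f (𝟙 X) (𝟙 Y) f (𝟙 X) (𝟙 Y) m g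
    (M.iso_mem _ inferInstance) (M.iso_mem _ inferInstance) hm hg
    IsPullback.of_id_snd (IsKernelPair.id_of_mono m)
    ⟨by simp⟩ ⟨po.w⟩ ⟨by simp⟩
  exact (h.mp (IsPushout.of_vert_isIso ⟨by simp⟩)).2

/-- In a vertical weak adhesive HLR category with pushouts along `M` stable under
pullback: given a cube over a pushout of a span of `M`-morphisms with back faces
pullbacks and top face a pushout, the right face is a pullback. -/
lemma aux_rightFace (M : StableSystemOfMonics C)
    (hpb : HasPullbacksAlongM M)
    (hstab : MStableUnderPushout M)
    (hVK : ∀ {X Y Z W : C} (f : X ⟶ Y) (m : X ⟶ Z) (g : Y ⟶ W) (n : Z ⟶ W),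
      M.P m → IsPushout f m g n → IsVerticalWeakVKSquare M f m g n)
    (hstable : PushoutsAlongMStableUnderPullback M)
    {X Y Z W X' Y' Z' W' : C}
    (f : X ⟶ Y) (m : X ⟶ Z) (g : Y ⟶ W) (n : Z ⟶ W)
    (f' : X' ⟶ Y') (m' : X' ⟶ Z') (g' : Y' ⟶ W') (n' : Z' ⟶ W')
    (x : X' ⟶ X) (y : Y' ⟶ Y) (z : Z' ⟶ Z) (w : W' ⟶ W)
    (hf : M.P f) (hm : M.P m) (hn : M.P n)
    (hB : IsPushout f m g n)
    (bf : IsPullback f' x y f) (bm : IsPullback m' x z m)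
    (cg : CommSq g' y w g) (cn : CommSq n' z w n)
    (hT : IsPushout f' m' g' n') : IsPullback n' z w n := by
  have hm' : M.P m' := M.pullback_stable x m' m z hm bm.flip
  have hf' : M.P f' := M.pullback_stable x f' f y hf bf.flip
  have hg' : M.P g' := hstab f' m' g' n' hm' hT
  have hn' : M.P n' := hstab m' f' n' g' hf' hT.flip
  have hBpb : IsPullback f m g n := aux_pushoutAlongM_isPullback M hstab hVK hm hB
  have monoN : Mono n := M.mono_of n hn
  have monoN' : Mono n' := M.mono_of n' hn'
  -- universal property of the right face
  have key : ∀ (Q : C) (u : Q ⟶ W') (t : Q ⟶ Z), u ≫ w = t ≫ n →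
      ∃ h : Q ⟶ Z', h ≫ n' = u ∧ h ≫ z = t := by
    intro Q u t huw
    obtain ⟨QY, α, β, pbY⟩ := hpb u g' hg'
    obtain ⟨QZ, γ, δ, pbZ⟩ := hpb u n' hn'
    obtain ⟨QX, πQ, πX, pbX⟩ := hpb u (f' ≫ g') (M.comp_mem f' g' hf' hg')
    have pbX' : IsPullback πQ πX u (m' ≫ n') := hT.w ▸ pbX
    -- the induced top span
    have wf : πQ ≫ u = (πX ≫ f') ≫ g' := by rw [pbX.w, Category.assoc]
    have wm : πQ ≫ u = (πX ≫ m') ≫ n' := by rw [pbX'.w, Category.assoc]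
    set ftil : QX ⟶ QY := pbY.lift πQ (πX ≫ f') wf with hftil
    set mtil : QX ⟶ QZ := pbZ.lift πQ (πX ≫ m') wm with hmtil
    have eα : ftil ≫ α = πQ := pbY.lift_fst _ _ _
    have eβ : ftil ≫ β = πX ≫ f' := pbY.lift_snd _ _ _
    have eγ : mtil ≫ γ = πQ := pbZ.lift_fst _ _ _
    have eδ : mtil ≫ δ = πX ≫ m' := pbZ.lift_snd _ _ _
    -- back faces of the cube over the top pushout
    have LF : IsPullback ftil πX β f' :=
      IsPullback.of_right (by rw [eα]; exact pbX) eβ pbY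
    have LM : IsPullback mtil πX δ m' :=
      IsPullback.of_right (by rw [eγ]; exact pbX') eδ pbZ
    -- by pullback stability, Q is a pushout of the induced span
    have topPO : IsPushout ftil mtil α γ :=
      hstable f' m' g' n' ftil mtil α γ πX β δ u hm' hT LF LM pbY pbZ
    -- the map QY ⟶ X using that the bottom pushout is a pullback
    have wε : (β ≫ y) ≫ g = (α ≫ t) ≫ n := by
      calc (β ≫ y) ≫ g = β ≫ (g' ≫ w) := by rw [Category.assoc, cg.w]
        _ = (α ≫ u) ≫ w := by rw [← Category.assoc, pbY.w]
        _ = α ≫ (t ≫ n) := by rw [Category.assoc, huw]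
        _ = (α ≫ t) ≫ n := by rw [Category.assoc]
    set ε : QY ⟶ X := hBpb.lift (β ≫ y) (α ≫ t) wε with hε
    have eεf : ε ≫ f = β ≫ y := hBpb.lift_fst _ _ _
    have eεm : ε ≫ m = α ≫ t := hBpb.lift_snd _ _ _
    -- the map QY ⟶ X' via the back face over f
    set κ : QY ⟶ X' := bf.lift β ε (by rw [eεf]) with hκ
    have eκf : κ ≫ f' = β := bf.lift_fst _ _ _
    have eκx : κ ≫ x = ε := bf.lift_snd _ _ _
    -- compatibility: ftil ≫ κ = πX
    have eπ : ftil ≫ κ = πX := by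
      apply bf.hom_ext
      · rw [Category.assoc, eκf, eβ]
      · rw [Category.assoc, eκx]
        apply hBpb.hom_ext
        · calc (ftil ≫ ε) ≫ f = ftil ≫ (β ≫ y) := by rw [Category.assoc, eεf]
            _ = (πX ≫ f') ≫ y := by rw [← Category.assoc, eβ]
            _ = πX ≫ (x ≫ f) := by rw [Category.assoc, bf.w]
            _ = (πX ≫ x) ≫ f := by rw [Category.assoc]
        · have hc : (ftil ≫ ε) ≫ m = πQ ≫ t := by
            rw [Category.assoc, eεm, ← Category.assoc, eα]
          rw [hc]
          have : (πX ≫ x) ≫ m = (πX ≫ m') ≫ z := by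
            rw [Category.assoc, Category.assoc, ← bm.w]
          rw [this]
          rw [← cancel_mono n]
          calc (πQ ≫ t) ≫ n = πQ ≫ (u ≫ w) := by rw [Category.assoc, huw]
            _ = (πX ≫ (m' ≫ n')) ≫ w := by rw [← Category.assoc, pbX'.w]
            _ = (πX ≫ m') ≫ (n' ≫ w) := by simp only [Category.assoc]
            _ = ((πX ≫ m') ≫ z) ≫ n := by rw [cn.w]; simp only [Category.assoc]
    -- descend to get the lift Q ⟶ Z'
    have wh : ftil ≫ (κ ≫ m') = mtil ≫ δ := by
      rw [← Category.assoc, eπ, eδ]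
    set h : Q ⟶ Z' := topPO.desc (κ ≫ m') δ wh with hh
    have eh1 : α ≫ h = κ ≫ m' := topPO.inl_desc _ _ _
    have eh2 : γ ≫ h = δ := topPO.inr_desc _ _ _
    refine ⟨h, ?_, ?_⟩
    · apply topPO.hom_ext
      · calc α ≫ (h ≫ n') = (κ ≫ m') ≫ n' := by rw [← Category.assoc, eh1]
          _ = κ ≫ (f' ≫ g') := by rw [Category.assoc, ← hT.w]
          _ = β ≫ g' := by rw [← Category.assoc, eκf]
          _ = α ≫ u := pbY.w.symm
      · calc γ ≫ (h ≫ n') = δ ≫ n' := by rw [← Category.assoc, eh2]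
          _ = γ ≫ u := pbZ.w.symm
    · apply topPO.hom_ext
      · calc α ≫ (h ≫ z) = (κ ≫ m') ≫ z := by rw [← Category.assoc, eh1]
          _ = κ ≫ (x ≫ m) := by rw [Category.assoc, bm.w]
          _ = ε ≫ m := by rw [← Category.assoc, eκx]
          _ = α ≫ t := eεm
      · rw [← Category.assoc, eh2, ← cancel_mono n]
        calc (δ ≫ z) ≫ n = δ ≫ (n' ≫ w) := by rw [Category.assoc, cn.w]
          _ = (γ ≫ u) ≫ w := by rw [← Category.assoc, pbZ.w]
          _ = γ ≫ (t ≫ n) := by rw [Category.assoc, huw]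
          _ = (γ ≫ t) ≫ n := by rw [Category.assoc]
  -- assemble the pullback from the universal property
  refine IsPullback.of_isLimit' cn (PullbackCone.IsLimit.mk cn.w
    (fun s => (key s.pt s.fst s.snd s.condition).choose)
    (fun s => (key s.pt s.fst s.snd s.condition).choose_spec.1)
    (fun s => (key s.pt s.fst s.snd s.condition).choose_spec.2)
    (fun s q hq1 hq2 => ?_))
  rw [← cancel_mono n']
  rw [hq1, (key s.pt s.fst s.snd s.condition).choose_spec.1]

/-- If `V` is a vertical weak adhesive HLR category with respect to `M` (pullbacks
along `M`-morphisms, pushouts along `M`-morphisms with `M` stable under pushout,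
and pushouts along `M`-morphisms are vertical weak van Kampen squares), and if in
addition pushouts along `M`-morphisms are stable under arbitrary pullbacks, then
`V` is also a horizontal weak adhesive HLR category: pushouts of spans of
`M`-morphisms (all of whose sides then lie in `M`) are full van Kampen squares. -/
theorem verticalWeakAdhesive_to_horizontalWeakAdhesive (M : StableSystemOfMonics C)
    (hpb : HasPullbacksAlongM M)
    (hpo : HasPushoutsAlongM M)
    (hstab : MStableUnderPushout M)
    (hVK : ∀ {X Y Z W : C} (f : X ⟶ Y) (m : X ⟶ Z) (g : Y ⟶ W) (n : Z ⟶ W),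
      M.P m → IsPushout f m g n → IsVerticalWeakVKSquare M f m g n)
    (hstable : PushoutsAlongMStableUnderPullback M) :
    HasPullbacksAlongM M ∧ HasPushoutsAlongM M ∧ MStableUnderPushout M ∧
    ∀ {X Y Z W : C} (f : X ⟶ Y) (m : X ⟶ Z) (g : Y ⟶ W) (n : Z ⟶ W),
      M.P f → M.P m → M.P g → M.P n → IsPushout f m g n →
      IsVanKampenSquare f m g n := by
  refine ⟨hpb, hpo, hstab, ?_⟩
  intro X Y Z W f m g n hf hm hg hn hB
  intro X' Y' Z' W' f' m' g' n' x y z w bf bm cg cn ctop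
  constructor
  · intro hT
    refine ⟨?_, ?_⟩
    · exact aux_rightFace M hpb hstab hVK hstable m f n g m' f' n' g' x z y w
        hm hf hg hB.flip bm bf cn cg hT.flip
    · exact aux_rightFace M hpb hstab hVK hstable f m g n f' m' g' n' x y z w
        hf hm hn hB bf bm cg cn hT
  · rintro ⟨Hg, Hn⟩
    exact hstable f m g n f' m' g' n' x y z w hm hB bf bm Hg Hn
end
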